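/- Let d ≥ 1 and θ = (θ₁,…,θ_{2d}) with θ_{2d} < 0, and A(θ) = ∫_{-∞}^∞ exp(θ₁ x + ⋯ + θ_{2d} x^{2d}) dx. Then A satisfies (θ₁ + 2θ₂ ∂₁ + 3θ₃ ∂₁² + ⋯ + 2d θ_{2d} ∂₁^{2d-1}) A(θ) = 0. -/

import Mathlib

/-!
Write `f(x) = θ₁ x + ⋯ + θ_{2d} x^{2d}`. Since `f(x) + c x → -∞` at both ends of the line for
every `c`, the function `t ↦ ∫ exp (f(x) + (t - θ₁) x) dx` is the moment generating function of the
finite measure `exp (f(x) - θ₁ x) dx`, finite for all `t`; hence `∂₁ⁿ A(θ) = ∫ xⁿ exp (f(x)) dx`.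
The operator in the theorem therefore turns `A` into `∫ f'(x) exp (f(x)) dx`, which vanishes
because `exp ∘ f` is a primitive of the integrand that tends to `0` at `±∞`.
-/

open MeasureTheory ProbabilityTheory Polynomial Filter Real Topology
open scoped ENNReal NNReal

def TendstoAtBotSuperlinearly (f : ℝ → ℝ) : Prop :=
  ∀ c : ℝ, Tendsto (fun x => f x + c * x) (cocompact ℝ) atBot

namespace TendstoAtBotSuperlinearly

variable {f : ℝ → ℝ}

lemma add_const_mul_id (hf : TendstoAtBotSuperlinearly f) (t : ℝ) :
    TendstoAtBotSuperlinearly (fun x => f x + t * x) := fun c => by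
  simpa only [add_assoc, ← add_mul] using hf (t + c)

lemma tendsto_exp (hf : TendstoAtBotSuperlinearly f) :
    Tendsto (fun x => exp (f x)) (cocompact ℝ) (𝓝 0) :=
  tendsto_exp_atBot.comp (by simpa using hf 0)

lemma integrable_exp (hf : TendstoAtBotSuperlinearly f) (hcont : Continuous f) :
    Integrable (fun x => exp (f x)) := by
  have hO (c : ℝ) {l : Filter ℝ} (hl : l ≤ cocompact ℝ) :
      (fun x => exp (f x)) =O[l] fun x => exp (-c * x) := by
    refine Asymptotics.IsBigO.of_bound' ?_
    filter_upwards [((hf c).mono_left hl).eventually_le_atBot 0] with x hx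
    simpa only [norm_eq_abs, abs_exp, exp_le_exp] using by linarith
  refine hcont.rexp.locallyIntegrable.integrable_of_isBigO_atBot_atTop
    (hO (-1) atBot_le_cocompact) ?_ (hO 1 atTop_le_cocompact) ?_
  · exact ⟨Set.Iic 0, Iic_mem_atBot 0, by simpa using integrableOn_exp_Iic 0⟩
  · exact ⟨Set.Ioi 0, Ioi_mem_atTop 0, exp_neg_integrableOn_Ioi 0 one_pos⟩

end TendstoAtBotSuperlinearly

namespace Polynomial

variable {p : ℝ[X]}

lemma tendsto_eval_cocompact_atBot (hp : 0 < p.natDegree) (heven : Even p.natDegree)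
    (hlc : p.leadingCoeff < 0) : Tendsto (fun x => p.eval x) (cocompact ℝ) atBot := by
  have hdeg : 0 < p.degree := natDegree_pos_iff_degree_pos.1 hp
  rw [cocompact_eq_atBot_atTop, tendsto_sup]
  refine ⟨?_, p.tendsto_atBot_of_leadingCoeff_nonpos hdeg hlc.le⟩
  have hneg := (p.comp (-X)).tendsto_atBot_of_leadingCoeff_nonpos (by simpa using hdeg)
    (by simpa [heven.neg_one_pow] using hlc.le)
  exact (hneg.comp tendsto_neg_atBot_atTop).congr fun x => by simp

lemma tendstoAtBotSuperlinearly_eval (hp : 0 < p.natDegree) (heven : Even p.natDegree)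
    (hlc : p.leadingCoeff < 0) : TendstoAtBotSuperlinearly fun x => p.eval x := by
  intro c
  have hlin : (C c * X).natDegree < p.natDegree :=
    ((natDegree_C_mul_le c X).trans natDegree_X_le).trans_lt (by obtain ⟨k, hk⟩ := heven; omega)
  have hnat : (p + C c * X).natDegree = p.natDegree := natDegree_add_eq_left_of_natDegree_lt hlin
  have hlc' : (p + C c * X).leadingCoeff = p.leadingCoeff :=
    leadingCoeff_add_of_degree_lt' (degree_lt_degree hlin)
  exact (tendsto_eval_cocompact_atBot (p := p + C c * X) (hnat ▸ hp) (hnat ▸ heven)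
    (hlc' ▸ hlc)).congr fun x => by simp

end Polynomial

lemma tendstoAtBotSuperlinearly_sum_mul_pow {s : Finset ℕ} {m : ℕ} {c : ℕ → ℝ}
    (hs : ∀ k ∈ s, k ≤ m) (hm : m ∈ s) (hpos : 0 < m) (heven : Even m) (hc : c m < 0) :
    TendstoAtBotSuperlinearly fun x => ∑ k ∈ s, c k * x ^ k := by
  set p : ℝ[X] := ∑ k ∈ s, C (c k) * X ^ k
  have hcoeff : p.coeff m = c m := by simp [p, hm]
  have hnat : p.natDegree = m := by
    refine le_antisymm (natDegree_sum_le_of_forall_le _ _ fun k hk => ?_)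
      (le_natDegree_of_ne_zero (hcoeff ▸ hc.ne))
    exact (natDegree_C_mul_X_pow_le _ _).trans (hs k hk)
  have hlc : p.leadingCoeff = c m := by rw [leadingCoeff, hnat, hcoeff]
  have hp : (fun x => ∑ k ∈ s, c k * x ^ k) = fun x => p.eval x := by
    ext x
    simp [p, eval_finsetSum]
  exact hp ▸ tendstoAtBotSuperlinearly_eval (hnat ▸ hpos) (hnat ▸ heven) (hlc ▸ hc)

section ExpDensity

variable {α : Type*} [MeasurableSpace α] {μ : Measure α} {f : α → ℝ}

lemma integral_withDensity_exp (hf : Measurable f) (g : α → ℝ) :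
    ∫ x, g x ∂μ.withDensity (fun x => ((exp (f x)).toNNReal : ℝ≥0∞)) =
      ∫ x, exp (f x) * g x ∂μ := by
  rw [integral_withDensity_eq_integral_smul (by fun_prop)]
  simp only [NNReal.smul_def, smul_eq_mul, coe_toNNReal _ (exp_pos _).le]

lemma integrable_withDensity_exp_iff (hf : Measurable f) {g : α → ℝ} :
    Integrable g (μ.withDensity (fun x => ((exp (f x)).toNNReal : ℝ≥0∞))) ↔
      Integrable (fun x => exp (f x) * g x) μ := by
  rw [integrable_withDensity_iff_integrable_smul (by fun_prop)]
  simp only [NNReal.smul_def, smul_eq_mul, coe_toNNReal _ (exp_pos _).le]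

end ExpDensity

namespace TendstoAtBotSuperlinearly

variable {f : ℝ → ℝ}

lemma integrableExpSet_withDensity_exp (hf : TendstoAtBotSuperlinearly f)
    (hcont : Continuous f) :
    integrableExpSet id (volume.withDensity fun x => ((exp (f x)).toNNReal : ℝ≥0∞)) =
      Set.univ := by
  ext t
  simpa [integrableExpSet, integrable_withDensity_exp_iff hcont.measurable, ← exp_add,
    mul_comm t] using (hf.add_const_mul_id t).integrable_exp (by fun_prop)

lemma iteratedDeriv_integral_exp_add_mul (hf : TendstoAtBotSuperlinearly f)
    (hcont : Continuous f) (n : ℕ) (t : ℝ) :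
    iteratedDeriv n (fun t => ∫ x, exp (f x + t * x)) t = ∫ x, x ^ n * exp (f x + t * x) := by
  have hmgf : mgf id (volume.withDensity fun x => ((exp (f x)).toNNReal : ℝ≥0∞)) =
      fun t => ∫ x, exp (f x + t * x) := by
    ext t
    simp [mgf, integral_withDensity_exp hcont.measurable, ← exp_add]
  rw [← hmgf, iteratedDeriv_mgf (by simp [hf.integrableExpSet_withDensity_exp hcont]),
    integral_withDensity_exp hcont.measurable]
  simp only [id, exp_add]
  congr 1 with x
  ring

lemma integrable_pow_mul_exp (hf : TendstoAtBotSuperlinearly f) (hcont : Continuous f) (n : ℕ) :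
    Integrable (fun x => x ^ n * exp (f x)) := by
  have h0 : (0 : ℝ) ∈ interior (integrableExpSet id
      (volume.withDensity fun x => ((exp (f x)).toNNReal : ℝ≥0∞))) := by
    simp [hf.integrableExpSet_withDensity_exp hcont]
  have := integrable_pow_mul_exp_of_mem_interior_integrableExpSet h0 n
  rw [integrable_withDensity_exp_iff hcont.measurable] at this
  simpa [mul_comm] using this

lemma integral_deriv_mul_exp_eq_zero (hf : TendstoAtBotSuperlinearly f) {f' : ℝ → ℝ}
    (hderiv : ∀ x, HasDerivAt f (f' x) x) (hint : Integrable fun x => f' x * exp (f x)) :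
    ∫ x, f' x * exp (f x) = 0 := by
  have hlim := hf.tendsto_exp
  rw [cocompact_eq_atBot_atTop, tendsto_sup] at hlim
  simpa [mul_comm] using integral_of_hasDerivAt_of_tendsto (fun x => (hderiv x).exp)
    (by simpa only [mul_comm] using hint) hlim.1 hlim.2

lemma sum_mul_integral_pow_mul_exp_eq_zero {s : Finset ℕ}
    {c : ℕ → ℝ} (hf : TendstoAtBotSuperlinearly fun x => ∑ k ∈ s, c k * x ^ k) :
    ∑ k ∈ s, k * c k * ∫ x, x ^ (k - 1) * exp (∑ j ∈ s, c j * x ^ j) = 0 := by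
  set f := fun x : ℝ => ∑ j ∈ s, c j * x ^ j
  have hderiv (x : ℝ) : HasDerivAt f (∑ k ∈ s, k * c k * x ^ (k - 1)) x :=
    HasDerivAt.fun_sum fun k _ => ((hasDerivAt_pow k x).const_mul (c k)).congr_deriv (by ring)
  have hint (k : ℕ) : Integrable fun x => k * c k * (x ^ (k - 1) * exp (f x)) :=
    (hf.integrable_pow_mul_exp (by fun_prop) _).const_mul _
  calc ∑ k ∈ s, k * c k * ∫ x, x ^ (k - 1) * exp (f x)
      = ∫ x, ∑ k ∈ s, k * c k * (x ^ (k - 1) * exp (f x)) := by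
        rw [integral_finsetSum _ fun k _ => hint k]
        simp_rw [integral_const_mul]
    _ = ∫ x, (∑ k ∈ s, k * c k * x ^ (k - 1)) * exp (f x) := by
        simp_rw [Finset.sum_mul, mul_assoc]
    _ = 0 := hf.integral_deriv_mul_exp_eq_zero hderiv <| by
        simpa only [Finset.sum_mul, mul_assoc] using integrable_finsetSum s fun k _ => hint k

end TendstoAtBotSuperlinearly

lemma Finset.sum_update_mul_pow {s : Finset ℕ} {i : ℕ} (hi : i ∈ s) (θ : ℕ → ℝ) (t x : ℝ) :
    ∑ k ∈ s, Function.update θ i t k * x ^ k =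
      ∑ k ∈ s, Function.update θ i 0 k * x ^ k + t * x ^ i := by
  rw [← Finset.add_sum_erase s _ hi, ← Finset.add_sum_erase s _ hi, Function.update_self,
    Function.update_self, zero_mul, zero_add, add_comm]
  congr 1
  refine Finset.sum_congr rfl fun k hk => ?_
  rw [Function.update_of_ne (Finset.ne_of_mem_erase hk),
    Function.update_of_ne (Finset.ne_of_mem_erase hk)]

lemma sum_mul_iteratedDeriv_integral_exp_eq_zero {s : Finset ℕ} (h1 : 1 ∈ s) {θ : ℕ → ℝ}
    (hθ : TendstoAtBotSuperlinearly fun x => ∑ k ∈ s, θ k * x ^ k) :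
    ∑ j ∈ s, (j : ℝ) * θ j *
      iteratedDeriv (j - 1) (fun t => ∫ x, exp (∑ k ∈ s, Function.update θ 1 t k * x ^ k)) (θ 1)
    = 0 := by
  set P := fun x : ℝ => ∑ k ∈ s, θ k * x ^ k
  have hsplit (t x : ℝ) : ∑ k ∈ s, Function.update θ 1 t k * x ^ k = P x + -θ 1 * x + t * x := by
    have ht := Finset.sum_update_mul_pow h1 θ t x
    have hθ1 := Finset.sum_update_mul_pow h1 θ (θ 1) x
    rw [Function.update_eq_self] at hθ1
    simp only [P, pow_one] at ht hθ1 ⊢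
    linarith
  have hA : (fun t => ∫ x, exp (∑ k ∈ s, Function.update θ 1 t k * x ^ k)) =
      fun t => ∫ x, exp (P x + -θ 1 * x + t * x) :=
    funext fun t => integral_congr_ae <| ae_of_all _ fun x => congrArg exp (hsplit t x)
  simp_rw [hA, (hθ.add_const_mul_id (-θ 1)).iteratedDeriv_integral_exp_add_mul (by fun_prop),
    neg_mul, neg_add_cancel_right]
  exact hθ.sum_mul_integral_pow_mul_exp_eq_zero

theorem stmt5 (d : ℕ) (hd : 1 ≤ d) (θ : ℕ → ℝ) (hθ : θ (2 * d) < 0) :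
    ∑ j ∈ Finset.Icc 1 (2 * d), (j : ℝ) * θ j *
      iteratedDeriv (j - 1) (fun t => ∫ x : ℝ,
        Real.exp (∑ k ∈ Finset.Icc 1 (2 * d), Function.update θ 1 t k * x ^ k)) (θ 1)
    = 0 := by
  have hP : TendstoAtBotSuperlinearly fun x => ∑ k ∈ Finset.Icc 1 (2 * d), θ k * x ^ k :=
    tendstoAtBotSuperlinearly_sum_mul_pow (fun k hk => (Finset.mem_Icc.1 hk).2)
      (Finset.mem_Icc.2 ⟨by omega, le_rfl⟩) (by omega) (even_two_mul d) hθ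
  exact sum_mul_iteratedDeriv_integral_exp_eq_zero (Finset.mem_Icc.2 ⟨le_rfl, by omega⟩) hP
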